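/- arXiv:2411.14583 — 6 statements merged into one kernel-verified Lean document; each statement's English description precedes it below -/
import Mathlib

section
/- Forward bisimilarity is a congruence with respect to parallel composition: if P1 ∼_FB P2 then P1 ∥_L P ∼_FB P2 ∥_L P and P ∥_L P1 ∼_FB P ∥_L P2 for all processes P and synchronization sets L (assuming all composed processes are reachable). -/
inductive Proc (A : Type) : Type
  | nil : Proc A
  | pre : A → Proc A → Proc A
  | done : A → Proc A → Proc A
  | choice : Proc A → Proc A → Proc A
  | par : Set A → Proc A → Proc A → Proc A

namespace Proc

variable {A : Type}

/-- `initial P` holds iff no †-decorated (executed) action occurs in `P`. -/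
def initial : Proc A → Prop
  | nil => True
  | pre _ P => initial P
  | done _ _ => False
  | choice P Q => initial P ∧ initial Q
  | par _ P Q => initial P ∧ initial Q

def decInitial : (P : Proc A) → Decidable (initial P)
  | nil => isTrue trivial
  | pre _ P => decInitial P
  | done _ _ => isFalse id
  | choice P Q => @instDecidableAnd _ _ (decInitial P) (decInitial Q)
  | par _ P Q => @instDecidableAnd _ _ (decInitial P) (decInitial Q)

instance (P : Proc A) : Decidable (initial P) := decInitial P

/-- Well-formed processes. -/
def wf : Proc A → Prop
  | nil => True
  | pre _ P => initial P
  | done _ P => wf P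
  | choice P Q => (wf P ∧ initial Q) ∨ (initial P ∧ wf Q)
  | par _ P Q => wf P ∧ wf Q

/-- Remove all †-decorations. -/
def toinitial : Proc A → Proc A
  | nil => nil
  | pre a P => pre a (toinitial P)
  | done a P => pre a (toinitial P)
  | choice P Q => choice (toinitial P) (toinitial Q)
  | par L P Q => par L (toinitial P) (toinitial Q)

/-- Forward ready set. -/
def frs : Proc A → Set A
  | nil => ∅
  | pre a _ => {a}
  | done _ P => frs P
  | choice P Q =>
      if initial P then (if initial Q then frs P ∪ frs Q else frs Q) else frs P
  | par L P Q => (frs P ∩ Lᶜ) ∪ (frs Q ∩ Lᶜ) ∪ (frs P ∩ frs Q ∩ L)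

/-- Backward ready set. -/
def brs : Proc A → Set A
  | nil => ∅
  | pre _ _ => ∅
  | done a P => if initial P then {a} else brs P
  | choice P Q =>
      if initial P then (if initial Q then ∅ else brs Q) else brs P
  | par L P Q => (brs P ∩ Lᶜ) ∪ (brs Q ∩ Lᶜ) ∪ (brs P ∩ brs Q ∩ L)

/-- Sequential processes: no parallel composition. -/
def sequential : Proc A → Prop
  | nil => True
  | pre _ P => sequential P
  | done _ P => sequential P
  | choice P Q => sequential P ∧ sequential Q
  | par _ _ _ => False

end Proc

/-- Proof terms labeling proved transitions. -/
inductive Theta (A : Type) : Type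
  | act : A → Theta A
  | dot : Theta A → Theta A
  | lplus : Theta A → Theta A
  | rplus : Theta A → Theta A
  | lpar : Theta A → Theta A
  | rpar : Theta A → Theta A
  | syn : Theta A → Theta A → Theta A

/-- The action underlying a proof term. -/
def Theta.action {A : Type} : Theta A → A
  | act a => a
  | dot θ => θ.action
  | lplus θ => θ.action
  | rplus θ => θ.action
  | lpar θ => θ.action
  | rpar θ => θ.action
  | syn θ _ => θ.action

/-- Proved operational semantics. -/
inductive Step {A : Type} : Proc A → Theta A → Proc A → Prop
  | act_f {a : A} {P : Proc A} :
      Proc.initial P → Step (.pre a P) (.act a) (.done a P)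
  | act_p {a : A} {θ : Theta A} {P P' : Proc A} :
      Step P θ P' → Step (.done a P) (.dot θ) (.done a P')
  | cho_l {θ : Theta A} {P1 P1' P2 : Proc A} :
      Step P1 θ P1' → Proc.initial P2 →
      Step (.choice P1 P2) (.lplus θ) (.choice P1' P2)
  | cho_r {θ : Theta A} {P1 P2 P2' : Proc A} :
      Step P2 θ P2' → Proc.initial P1 →
      Step (.choice P1 P2) (.rplus θ) (.choice P1 P2')
  | par_l {L : Set A} {θ : Theta A} {P1 P1' P2 : Proc A} :
      Step P1 θ P1' → θ.action ∉ L →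
      Step (.par L P1 P2) (.lpar θ) (.par L P1' P2)
  | par_r {L : Set A} {θ : Theta A} {P1 P2 P2' : Proc A} :
      Step P2 θ P2' → θ.action ∉ L →
      Step (.par L P1 P2) (.rpar θ) (.par L P1 P2')
  | syn {L : Set A} {θ1 θ2 : Theta A} {P1 P1' P2 P2' : Proc A} :
      Step P1 θ1 P1' → Step P2 θ2 P2' →
      θ1.action = θ2.action → θ1.action ∈ L →
      Step (.par L P1 P2) (.syn θ1 θ2) (.par L P1' P2')

/-- Reachable processes: reachable from some initial process via transitions. -/
def Reachable {A : Type} (P : Proc A) : Prop :=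
  ∃ P0 : Proc A, Proc.initial P0 ∧
    Relation.ReflTransGen (fun X Y => ∃ θ : Theta A, Step X θ Y) P0 P

section Bisim

variable {A : Type}

/-- Forward bisimulation: symmetric, matches outgoing transitions. -/
def IsFB (B : Proc A → Proc A → Prop) : Prop :=
  (∀ ⦃Q1 Q2⦄, B Q1 Q2 → B Q2 Q1) ∧
  ∀ ⦃Q1 Q2⦄, B Q1 Q2 → ∀ ⦃θ1 Q1'⦄, Step Q1 θ1 Q1' →
    ∃ θ2 Q2', Step Q2 θ2 Q2' ∧ θ1.action = θ2.action ∧ B Q1' Q2'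

/-- Forward bisimilarity. -/
def FB (P1 P2 : Proc A) : Prop := ∃ B, IsFB B ∧ B P1 P2

/-- Reverse bisimulation: symmetric, matches incoming transitions. -/
def IsRB (B : Proc A → Proc A → Prop) : Prop :=
  (∀ ⦃Q1 Q2⦄, B Q1 Q2 → B Q2 Q1) ∧
  ∀ ⦃Q1 Q2⦄, B Q1 Q2 → ∀ ⦃θ1 Q1'⦄, Step Q1' θ1 Q1 →
    ∃ θ2 Q2', Step Q2' θ2 Q2 ∧ θ1.action = θ2.action ∧ B Q1' Q2'

/-- Reverse bisimilarity. -/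
def RB (P1 P2 : Proc A) : Prop := ∃ B, IsRB B ∧ B P1 P2

/-- Forward-reverse bisimulation. -/
def IsFRB (B : Proc A → Proc A → Prop) : Prop :=
  (∀ ⦃Q1 Q2⦄, B Q1 Q2 → B Q2 Q1) ∧
  (∀ ⦃Q1 Q2⦄, B Q1 Q2 → ∀ ⦃θ1 Q1'⦄, Step Q1 θ1 Q1' →
    ∃ θ2 Q2', Step Q2 θ2 Q2' ∧ θ1.action = θ2.action ∧ B Q1' Q2') ∧
  (∀ ⦃Q1 Q2⦄, B Q1 Q2 → ∀ ⦃θ1 Q1'⦄, Step Q1' θ1 Q1 →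
    ∃ θ2 Q2', Step Q2' θ2 Q2 ∧ θ1.action = θ2.action ∧ B Q1' Q2')

/-- Forward-reverse bisimilarity. -/
def FRB (P1 P2 : Proc A) : Prop := ∃ B, IsFRB B ∧ B P1 P2

/-- Past-sensitive forward bisimulation. -/
def IsFBps (B : Proc A → Proc A → Prop) : Prop :=
  IsFB B ∧ ∀ ⦃Q1 Q2⦄, B Q1 Q2 → (Proc.initial Q1 ↔ Proc.initial Q2)

/-- Past-sensitive forward bisimilarity. -/
def FBps (P1 P2 : Proc A) : Prop := ∃ B, IsFBps B ∧ B P1 P2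

end Bisim

/-- Target calculus of the ℓ_brs-encoding: prefixes carry a set of actions. -/
inductive BProc (A : Type) : Type
  | nil : BProc A
  | pre : A → Set A → BProc A → BProc A
  | done : A → Set A → BProc A → BProc A
  | choice : BProc A → BProc A → BProc A

namespace BProc

variable {A : Type}

def initial : BProc A → Prop
  | nil => True
  | pre _ _ U => initial U
  | done _ _ _ => False
  | choice U V => initial U ∧ initial V

def decInitial : (U : BProc A) → Decidable (initial U)
  | nil => isTrue trivial
  | pre _ _ U => decInitial U
  | done _ _ _ => isFalse id
  | choice U V => @instDecidableAnd _ _ (decInitial U) (decInitial V)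

instance (U : BProc A) : Decidable (initial U) := decInitial U

/-- Backward ready set of an encoded process (ignoring annotations). -/
def brs : BProc A → Set A
  | nil => ∅
  | pre _ _ _ => ∅
  | done a _ U => if initial U then {a} else brs U
  | choice U V =>
      if initial U then (if initial V then ∅ else brs V) else brs U

end BProc

/-- The ℓ_brs-encoding, given compositionally (on sequential processes). -/
def enc {A : Type} : Proc A → BProc A
  | .nil => .nil
  | .pre a P => .pre a {a} (enc P)
  | .done a P => .done a (Proc.brs (.done a P)) (enc P)
  | .choice P Q => .choice (enc P) (enc Q)
  | .par _ _ _ => .nil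

/-- Proved operational semantics of the encoded calculus. -/
inductive BStep {A : Type} : BProc A → Theta A → Set A → BProc A → Prop
  | act_f {a : A} {S : Set A} {U : BProc A} :
      BProc.initial U → BStep (.pre a S U) (.act a) S (.done a S U)
  | act_p {a : A} {S T : Set A} {θ : Theta A} {U U' : BProc A} :
      BStep U θ T U' → BStep (.done a S U) (.dot θ) T (.done a S U')
  | cho_l {S : Set A} {θ : Theta A} {U1 U1' U2 : BProc A} :
      BStep U1 θ S U1' → BProc.initial U2 →
      BStep (.choice U1 U2) (.lplus θ) S (.choice U1' U2)
  | cho_r {S : Set A} {θ : Theta A} {U1 U2 U2' : BProc A} :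
      BStep U2 θ S U2' → BProc.initial U1 →
      BStep (.choice U1 U2) (.rplus θ) S (.choice U1 U2')


private theorem fb_par_left {A : Type} {P1 P2 : Proc A} (h : FB P1 P2)
    (P : Proc A) (L : Set A) : FB (Proc.par L P1 P) (Proc.par L P2 P) := by
  obtain ⟨B, ⟨hsym, hstep⟩, hB⟩ := h
  refine ⟨fun Q1 Q2 => ∃ X Y Q, B X Y ∧ Q1 = Proc.par L X Q ∧ Q2 = Proc.par L Y Q,
    ⟨?_, ?_⟩, P1, P2, P, hB, rfl, rfl⟩
  · rintro Q1 Q2 ⟨X, Y, Q, hXY, rfl, rfl⟩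
    exact ⟨Y, X, Q, hsym hXY, rfl, rfl⟩
  · rintro Q1 Q2 ⟨X, Y, Q, hXY, rfl, rfl⟩ θ Q1' hs
    cases hs with
    | par_l h1 hnotin =>
        obtain ⟨θ2, Y', hsY, hact, hB'⟩ := hstep hXY h1
        exact ⟨.lpar θ2, Proc.par L Y' Q, .par_l hsY (hact ▸ hnotin), hact,
          _, _, _, hB', rfl, rfl⟩
    | par_r h1 hnotin =>
        exact ⟨.rpar _, Proc.par L Y _, .par_r h1 hnotin, rfl,
          _, _, _, hXY, rfl, rfl⟩
    | syn h1 h2 heq hmem =>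
        obtain ⟨θ2, Y', hsY, hact, hB'⟩ := hstep hXY h1
        exact ⟨.syn θ2 _, Proc.par L Y' _,
          .syn hsY h2 (hact ▸ heq) (hact ▸ hmem), hact,
          _, _, _, hB', rfl, rfl⟩

private theorem fb_par_right {A : Type} {P1 P2 : Proc A} (h : FB P1 P2)
    (P : Proc A) (L : Set A) : FB (Proc.par L P P1) (Proc.par L P P2) := by
  obtain ⟨B, ⟨hsym, hstep⟩, hB⟩ := h
  refine ⟨fun Q1 Q2 => ∃ X Y Q, B X Y ∧ Q1 = Proc.par L Q X ∧ Q2 = Proc.par L Q Y,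
    ⟨?_, ?_⟩, P1, P2, P, hB, rfl, rfl⟩
  · rintro Q1 Q2 ⟨X, Y, Q, hXY, rfl, rfl⟩
    exact ⟨Y, X, Q, hsym hXY, rfl, rfl⟩
  · rintro Q1 Q2 ⟨X, Y, Q, hXY, rfl, rfl⟩ θ Q1' hs
    cases hs with
    | par_r h1 hnotin =>
        obtain ⟨θ2, Y', hsY, hact, hB'⟩ := hstep hXY h1
        exact ⟨.rpar θ2, Proc.par L Q Y', .par_r hsY (hact ▸ hnotin), hact,
          _, _, _, hB', rfl, rfl⟩
    | par_l h1 hnotin =>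
        exact ⟨.lpar _, Proc.par L _ Y, .par_l h1 hnotin, rfl,
          _, _, _, hXY, rfl, rfl⟩
    | syn h1 h2 heq hmem =>
        obtain ⟨θ2, Y', hsY, hact, hB'⟩ := hstep hXY h2
        exact ⟨.syn _ θ2, Proc.par L _ Y',
          .syn h1 hsY (heq.trans hact) hmem, rfl,
          _, _, _, hB', rfl, rfl⟩

theorem fb_congr_par {A : Type} {P1 P2 : Proc A} (h : FB P1 P2)
    (P : Proc A) (L : Set A)
    (r1 : Reachable (Proc.par L P1 P)) (r2 : Reachable (Proc.par L P2 P))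
    (r3 : Reachable (Proc.par L P P1)) (r4 : Reachable (Proc.par L P P2)) :
    FB (Proc.par L P1 P) (Proc.par L P2 P) ∧ FB (Proc.par L P P1) (Proc.par L P P2) :=
  ⟨fb_par_left h P L, fb_par_right h P L⟩
end

section
/- Reverse bisimilarity is a congruence with respect to parallel composition: if P1 ∼_RB P2 then P1 ∥_L P ∼_RB P2 ∥_L P and P ∥_L P1 ∼_RB P ∥_L P2 for all P and L (assuming all composed processes are reachable). -/
theorem rb_congr_par {A : Type} {P1 P2 : Proc A} (h : RB P1 P2)
    (P : Proc A) (L : Set A)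
    (r1 : Reachable (Proc.par L P1 P)) (r2 : Reachable (Proc.par L P2 P))
    (r3 : Reachable (Proc.par L P P1)) (r4 : Reachable (Proc.par L P P2)) :
    RB (Proc.par L P1 P) (Proc.par L P2 P) ∧ RB (Proc.par L P P1) (Proc.par L P P2) := by
  obtain ⟨B, ⟨hsym, hstep⟩, hB⟩ := h
  constructor
  · refine ⟨fun X Y => ∃ Q1 Q2 Q, B Q1 Q2 ∧ X = .par L Q1 Q ∧ Y = .par L Q2 Q,
      ⟨?_, ?_⟩, ⟨P1, P2, P, hB, rfl, rfl⟩⟩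
    · rintro X Y ⟨Q1, Q2, Q, hb, rfl, rfl⟩
      exact ⟨Q2, Q1, Q, hsym hb, rfl, rfl⟩
    · rintro X Y ⟨Q1, Q2, Q, hb, rfl, rfl⟩ θ X' hs
      cases hs with
      | @par_l _ _ R1 _ _ h1 hn =>
        obtain ⟨θ2, Q2', hs2, hact, hb'⟩ := hstep hb h1
        exact ⟨.lpar θ2, .par L Q2' Q, Step.par_l hs2 (hact ▸ hn), hact,
          R1, Q2', Q, hb', rfl, rfl⟩
      | @par_r _ θb _ R2 _ h2 hn =>
        exact ⟨.rpar θb, .par L Q2 R2, Step.par_r h2 hn, rfl,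
          Q1, Q2, R2, hb, rfl, rfl⟩
      | @syn _ θa θb R1 _ R2 _ h1 h2 heq hmem =>
        obtain ⟨θ2, Q2', hs2, hact, hb'⟩ := hstep hb h1
        exact ⟨.syn θ2 θb, .par L Q2' R2,
          Step.syn hs2 h2 (hact ▸ heq) (hact ▸ hmem), hact,
          R1, Q2', R2, hb', rfl, rfl⟩
  · refine ⟨fun X Y => ∃ Q1 Q2 Q, B Q1 Q2 ∧ X = .par L Q Q1 ∧ Y = .par L Q Q2,
      ⟨?_, ?_⟩, ⟨P1, P2, P, hB, rfl, rfl⟩⟩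
    · rintro X Y ⟨Q1, Q2, Q, hb, rfl, rfl⟩
      exact ⟨Q2, Q1, Q, hsym hb, rfl, rfl⟩
    · rintro X Y ⟨Q1, Q2, Q, hb, rfl, rfl⟩ θ X' hs
      cases hs with
      | @par_l _ θa R1 _ _ h1 hn =>
        exact ⟨.lpar θa, .par L R1 Q2, Step.par_l h1 hn, rfl,
          Q1, Q2, R1, hb, rfl, rfl⟩
      | @par_r _ θb _ R2 _ h2 hn =>
        obtain ⟨θ2, Q2', hs2, hact, hb'⟩ := hstep hb h2
        exact ⟨.rpar θ2, .par L Q Q2', Step.par_r hs2 (hact ▸ hn), hact,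
          R2, Q2', Q, hb', rfl, rfl⟩
      | @syn _ θa θb R1 _ R2 _ h1 h2 heq hmem =>
        obtain ⟨θ2, Q2', hs2, hact, hb'⟩ := hstep hb h2
        exact ⟨.syn θa θ2, .par L R1 Q2', Step.syn h1 hs2 (heq.trans hact) hmem, rfl,
          R2, Q2', R1, hb', rfl, rfl⟩
end

section
/- Forward-reverse bisimilarity is a congruence with respect to parallel composition: if P1 ∼_FRB P2 then P1 ∥_L P ∼_FRB P2 ∥_L P and P ∥_L P1 ∼_FRB P ∥_L P2 (assuming all composed processes are reachable). -/
theorem frb_par_left {A : Type} {P1 P2 : Proc A} (h : FRB P1 P2)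
    (P : Proc A) (L : Set A) : FRB (Proc.par L P1 P) (Proc.par L P2 P) := by
  obtain ⟨B, ⟨hsym, hfwd, hbwd⟩, hB⟩ := h
  refine ⟨fun Q Q' => ∃ X Y R, B X Y ∧ Q = Proc.par L X R ∧ Q' = Proc.par L Y R,
    ⟨?_, ?_, ?_⟩, P1, P2, P, hB, rfl, rfl⟩
  · rintro Q1 Q2 ⟨X, Y, R, hXY, rfl, rfl⟩
    exact ⟨Y, X, R, hsym hXY, rfl, rfl⟩
  · rintro Q1 Q2 ⟨X, Y, R, hXY, rfl, rfl⟩ θ Q1' hs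
    cases hs with
    | par_l hX hnot =>
      obtain ⟨θ2, Y', hY, hact, hB'⟩ := hfwd hXY hX
      exact ⟨.lpar θ2, _, Step.par_l hY (hact ▸ hnot), hact, _, _, _, hB', rfl, rfl⟩
    | par_r hR hnot =>
      exact ⟨.rpar _, _, Step.par_r hR hnot, rfl, _, _, _, hXY, rfl, rfl⟩
    | syn hX hR hactEq hmem =>
      obtain ⟨θ2, Y', hY, hact, hB'⟩ := hfwd hXY hX
      exact ⟨.syn θ2 _, _, Step.syn hY hR (hact ▸ hactEq) (hact ▸ hmem), hact,
        _, _, _, hB', rfl, rfl⟩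
  · rintro Q1 Q2 ⟨X, Y, R, hXY, rfl, rfl⟩ θ Q1' hs
    cases hs with
    | par_l hX hnot =>
      obtain ⟨θ2, Y', hY, hact, hB'⟩ := hbwd hXY hX
      exact ⟨.lpar θ2, _, Step.par_l hY (hact ▸ hnot), hact, _, _, _, hB', rfl, rfl⟩
    | par_r hR hnot =>
      exact ⟨.rpar _, _, Step.par_r hR hnot, rfl, _, _, _, hXY, rfl, rfl⟩
    | syn hX hR hactEq hmem =>
      obtain ⟨θ2, Y', hY, hact, hB'⟩ := hbwd hXY hX
      exact ⟨.syn θ2 _, _, Step.syn hY hR (hact ▸ hactEq) (hact ▸ hmem), hact,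
        _, _, _, hB', rfl, rfl⟩

theorem frb_par_right {A : Type} {P1 P2 : Proc A} (h : FRB P1 P2)
    (P : Proc A) (L : Set A) : FRB (Proc.par L P P1) (Proc.par L P P2) := by
  obtain ⟨B, ⟨hsym, hfwd, hbwd⟩, hB⟩ := h
  refine ⟨fun Q Q' => ∃ X Y R, B X Y ∧ Q = Proc.par L R X ∧ Q' = Proc.par L R Y,
    ⟨?_, ?_, ?_⟩, P1, P2, P, hB, rfl, rfl⟩
  · rintro Q1 Q2 ⟨X, Y, R, hXY, rfl, rfl⟩
    exact ⟨Y, X, R, hsym hXY, rfl, rfl⟩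
  · rintro Q1 Q2 ⟨X, Y, R, hXY, rfl, rfl⟩ θ Q1' hs
    cases hs with
    | par_r hX hnot =>
      obtain ⟨θ2, Y', hY, hact, hB'⟩ := hfwd hXY hX
      exact ⟨.rpar θ2, _, Step.par_r hY (hact ▸ hnot), hact, _, _, _, hB', rfl, rfl⟩
    | par_l hR hnot =>
      exact ⟨.lpar _, _, Step.par_l hR hnot, rfl, _, _, _, hXY, rfl, rfl⟩
    | syn hR hX hactEq hmem =>
      obtain ⟨θ2, Y', hY, hact, hB'⟩ := hfwd hXY hX
      exact ⟨.syn _ θ2, _, Step.syn hR hY (hactEq.trans hact) hmem, rfl,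
        _, _, _, hB', rfl, rfl⟩
  · rintro Q1 Q2 ⟨X, Y, R, hXY, rfl, rfl⟩ θ Q1' hs
    cases hs with
    | par_r hX hnot =>
      obtain ⟨θ2, Y', hY, hact, hB'⟩ := hbwd hXY hX
      exact ⟨.rpar θ2, _, Step.par_r hY (hact ▸ hnot), hact, _, _, _, hB', rfl, rfl⟩
    | par_l hR hnot =>
      exact ⟨.lpar _, _, Step.par_l hR hnot, rfl, _, _, _, hXY, rfl, rfl⟩
    | syn hR hX hactEq hmem =>
      obtain ⟨θ2, Y', hY, hact, hB'⟩ := hbwd hXY hX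
      exact ⟨.syn _ θ2, _, Step.syn hR hY (hactEq.trans hact) hmem, rfl,
        _, _, _, hB', rfl, rfl⟩

theorem frb_congr_par {A : Type} {P1 P2 : Proc A} (h : FRB P1 P2)
    (P : Proc A) (L : Set A)
    (r1 : Reachable (Proc.par L P1 P)) (r2 : Reachable (Proc.par L P2 P))
    (r3 : Reachable (Proc.par L P P1)) (r4 : Reachable (Proc.par L P P2)) :
    FRB (Proc.par L P1 P) (Proc.par L P2 P) ∧ FRB (Proc.par L P P1) (Proc.par L P P2) :=
  ⟨frb_par_left h P L, frb_par_right h P L⟩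
end

section
/- Past-sensitive forward bisimilarity is a congruence with respect to parallel composition: if P1 ∼_FB:ps P2 then P1 ∥_L P ∼_FB:ps P2 ∥_L P and P ∥_L P1 ∼_FB:ps P ∥_L P2. -/
theorem fbps_congr_par_left {A : Type} {P1 P2 : Proc A} (h : FBps P1 P2)
    (P : Proc A) (L : Set A) : FBps (Proc.par L P1 P) (Proc.par L P2 P) := by
  obtain ⟨B, ⟨⟨hsym, hstep⟩, hini⟩, hB⟩ := h
  refine ⟨fun X Y => ∃ Q1 Q2 Q, B Q1 Q2 ∧ X = .par L Q1 Q ∧ Y = .par L Q2 Q,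
    ⟨⟨?_, ?_⟩, ?_⟩, P1, P2, P, hB, rfl, rfl⟩
  · rintro X Y ⟨Q1, Q2, Q, hb, rfl, rfl⟩
    exact ⟨Q2, Q1, Q, hsym hb, rfl, rfl⟩
  · rintro X Y ⟨Q1, Q2, Q, hb, rfl, rfl⟩ θ X' hs
    cases hs with
    | par_l h1 hnotin =>
      obtain ⟨θ2, Q2', hs2, hact, hb'⟩ := hstep hb h1
      exact ⟨.lpar θ2, _, Step.par_l hs2 (hact ▸ hnotin), hact,
        _, _, _, hb', rfl, rfl⟩
    | par_r h1 hnotin =>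
      exact ⟨.rpar _, _, Step.par_r h1 hnotin, rfl, _, _, _, hb, rfl, rfl⟩
    | syn h1 h2 heq hmem =>
      obtain ⟨θ2, Q2', hs2, hact, hb'⟩ := hstep hb h1
      exact ⟨.syn θ2 _, _, Step.syn hs2 h2 (hact ▸ heq) (hact ▸ hmem), hact,
        _, _, _, hb', rfl, rfl⟩
  · rintro X Y ⟨Q1, Q2, Q, hb, rfl, rfl⟩
    have := hini hb
    simp only [Proc.initial]
    tauto

theorem fbps_congr_par_right {A : Type} {P1 P2 : Proc A} (h : FBps P1 P2)
    (P : Proc A) (L : Set A) : FBps (Proc.par L P P1) (Proc.par L P P2) := by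
  obtain ⟨B, ⟨⟨hsym, hstep⟩, hini⟩, hB⟩ := h
  refine ⟨fun X Y => ∃ Q1 Q2 Q, B Q1 Q2 ∧ X = .par L Q Q1 ∧ Y = .par L Q Q2,
    ⟨⟨?_, ?_⟩, ?_⟩, P1, P2, P, hB, rfl, rfl⟩
  · rintro X Y ⟨Q1, Q2, Q, hb, rfl, rfl⟩
    exact ⟨Q2, Q1, Q, hsym hb, rfl, rfl⟩
  · rintro X Y ⟨Q1, Q2, Q, hb, rfl, rfl⟩ θ X' hs
    cases hs with
    | par_r h1 hnotin =>
      obtain ⟨θ2, Q2', hs2, hact, hb'⟩ := hstep hb h1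
      exact ⟨.rpar θ2, _, Step.par_r hs2 (hact ▸ hnotin), hact,
        _, _, _, hb', rfl, rfl⟩
    | par_l h1 hnotin =>
      exact ⟨.lpar _, _, Step.par_l h1 hnotin, rfl, _, _, _, hb, rfl, rfl⟩
    | syn h1 h2 heq hmem =>
      obtain ⟨θ2, Q2', hs2, hact, hb'⟩ := hstep hb h2
      exact ⟨.syn _ θ2, _, Step.syn h1 hs2 (heq.trans hact) hmem, rfl,
        _, _, _, hb', rfl, rfl⟩
  · rintro X Y ⟨Q1, Q2, Q, hb, rfl, rfl⟩
    have := hini hb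
    simp only [Proc.initial]
    tauto

theorem fbps_congr_par {A : Type} {P1 P2 : Proc A} (h : FBps P1 P2)
    (P : Proc A) (L : Set A) :
    FBps (Proc.par L P1 P) (Proc.par L P2 P) ∧ FBps (Proc.par L P P1) (Proc.par L P P2) :=
  ⟨fbps_congr_par_left h P L, fbps_congr_par_right h P L⟩
end

section
/- For sequential reversible processes, every non-initial reachable process has exactly one incoming proved transition, i.e., if P' is non-initial and sequential then there exists exactly one pair (P, θ) with P --θ--> P'. -/
theorem step_not_initial {A : Type} {P : Proc A} {θ : Theta A} {P' : Proc A}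
    (h : Step P θ P') : ¬ Proc.initial P' := by
  induction h with
  | act_f _ => exact id
  | act_p _ _ => exact id
  | cho_l _ _ ih => exact fun hi => ih hi.1
  | cho_r _ _ ih => exact fun hi => ih hi.2
  | par_l _ _ ih => exact fun hi => ih hi.1
  | par_r _ _ ih => exact fun hi => ih hi.2
  | syn _ _ _ _ ih _ => exact fun hi => ih hi.1

theorem seq_unique_incoming {A : Type} {P' : Proc A}
    (hseq : Proc.sequential P') (hwf : Proc.wf P') (hni : ¬ Proc.initial P') :
    ∃! pθ : Proc A × Theta A, Step pθ.1 pθ.2 P' := by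
  induction P' with
  | nil => exact absurd trivial hni
  | pre a P _ => exact absurd hwf hni
  | done a P ih =>
    by_cases hP : Proc.initial P
    · refine ⟨(Proc.pre a P, Theta.act a), Step.act_f hP, ?_⟩
      rintro ⟨Q, θ⟩ h
      cases h with
      | act_f _ => rfl
      | act_p hs => exact absurd hP (step_not_initial hs)
    · obtain ⟨⟨Q, θ⟩, hs, hu⟩ := ih hseq hwf hP
      refine ⟨(Proc.done a Q, Theta.dot θ), Step.act_p hs, ?_⟩
      rintro ⟨Q', θ'⟩ h
      cases h with
      | act_f h => exact absurd h hP
      | act_p hs' =>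
        have := hu (_, _) hs'
        simpa using this
  | choice P Q ihP ihQ =>
    rcases hwf with ⟨hwP, hiQ⟩ | ⟨hiP, hwQ⟩
    · have hnP : ¬ Proc.initial P := fun h => hni ⟨h, hiQ⟩
      obtain ⟨⟨R, θ⟩, hs, hu⟩ := ihP hseq.1 hwP hnP
      refine ⟨(Proc.choice R Q, Theta.lplus θ), Step.cho_l hs hiQ, ?_⟩
      rintro ⟨R', θ'⟩ h
      cases h with
      | cho_l hs' _ =>
        have := hu (_, _) hs'
        simpa using this
      | cho_r _ hi => exact absurd hi hnP
    · have hnQ : ¬ Proc.initial Q := fun h => hni ⟨hiP, h⟩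
      obtain ⟨⟨R, θ⟩, hs, hu⟩ := ihQ hseq.2 hwQ hnQ
      refine ⟨(Proc.choice P R, Theta.rplus θ), Step.cho_r hs hiP, ?_⟩
      rintro ⟨R', θ'⟩ h
      cases h with
      | cho_l _ hi => exact absurd hi hnQ
      | cho_r hs' _ =>
        have := hu (_, _) hs'
        simpa using this
  | par L P Q _ _ => exact hseq.elim
end

section
/- The backward ready set of a sequential non-initial well-formed process is a singleton: if P is sequential, well-formed, and non-initial, then there exists an action a with brs(P) = {a}. -/
theorem seq_brs_singleton {A : Type} {P : Proc A}
    (hseq : Proc.sequential P) (hwf : Proc.wf P) (hni : ¬ Proc.initial P) :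
    ∃ a : A, Proc.brs P = {a} := by
  induction P with
  | nil => exact absurd trivial hni
  | pre a P ih => exact absurd hwf hni
  | done a P ih =>
    by_cases h : Proc.initial P
    · exact ⟨a, by simp [Proc.brs, h]⟩
    · obtain ⟨b, hb⟩ := ih hseq hwf h
      exact ⟨b, by simpa [Proc.brs, h] using hb⟩
  | choice P Q ihP ihQ =>
    rcases hwf with ⟨hwP, hiQ⟩ | ⟨hiP, hwQ⟩
    · have hnP : ¬ Proc.initial P := fun h => hni ⟨h, hiQ⟩
      obtain ⟨b, hb⟩ := ihP hseq.1 hwP hnP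
      exact ⟨b, by simpa [Proc.brs, hnP] using hb⟩
    · have hnQ : ¬ Proc.initial Q := fun h => hni ⟨hiP, h⟩
      obtain ⟨b, hb⟩ := ihQ hseq.2 hwQ hnQ
      exact ⟨b, by simpa [Proc.brs, hiP, hnQ] using hb⟩
  | par L P Q ihP ihQ => exact absurd hseq id
end
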